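/- arXiv:2511.21864 — 5 statements merged into one kernel-verified Lean document; each statement's English description precedes it below -/
import Mathlib

section
/- Fix R₂ > 0 and 0 < ρ < R₂. Define g₁(r) = 2r/R₂² and g₂(r) = (2r/(π R₂²))·arccos((ρ² + r² − R₂²)/(2ρr)). Then ∫₀^{R₂−ρ} g₁(r) dr + ∫_{R₂−ρ}^{R₂+ρ} g₂(r) dr = 1. -/
/-!
The first integral is `(R₂ - ρ)² / R₂²`. For the second, with `u x = (ρ² + x² - R₂²) / (2ρx)` the
cosine-rule argument, `x²/2 · arccos (u x) - A(x) + R₂²/2 · arcsin ((x² - ρ² - R₂²) / (2ρR₂))` is an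
antiderivative of `x · arccos (u x)` on `(R₂ - ρ, R₂ + ρ)`, where `A(x)` is the area of the
triangle with sides `ρ, R₂, x`. At both endpoints the triangle degenerates: `A` vanishes and the
inverse cosines and sines take the values `0, π` and `±π/2`, so the second integral is
`π/2 · (R₂² - (R₂ - ρ)²)`, and the two parts add up to `1`.
-/

open Real Set intervalIntegral

-- 16 · (area)² of a triangle with sides ρ, R, x (Heron's formula).
def heron (ρ R x : ℝ) : ℝ := 4 * ρ ^ 2 * R ^ 2 - (x ^ 2 - ρ ^ 2 - R ^ 2) ^ 2

lemma heron_eq_mul (ρ R x : ℝ) :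
    heron ρ R x = ((R + ρ) ^ 2 - x ^ 2) * (x ^ 2 - (R - ρ) ^ 2) := by
  unfold heron; ring

lemma heron_pos {ρ R x : ℝ} (hx₁ : |R - ρ| < x) (hx₂ : x < R + ρ) : 0 < heron ρ R x := by
  have hx : 0 < x := (abs_nonneg _).trans_lt hx₁
  rw [heron_eq_mul]
  apply mul_pos
  · nlinarith
  · nlinarith [sq_abs (R - ρ), abs_nonneg (R - ρ)]

lemma one_sub_sq_cosineRule_eq_heron_div {ρ R x : ℝ} (hρ : ρ ≠ 0) (hx : x ≠ 0) :
    1 - ((ρ ^ 2 + x ^ 2 - R ^ 2) / (2 * ρ * x)) ^ 2 = heron ρ R x / (2 * ρ * x) ^ 2 := by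
  unfold heron; field_simp; ring

lemma one_sub_sq_arcsinArg_eq_heron_div {ρ R x : ℝ} (hρ : ρ ≠ 0) (hR : R ≠ 0) :
    1 - ((x ^ 2 - ρ ^ 2 - R ^ 2) / (2 * ρ * R)) ^ 2 = heron ρ R x / (2 * ρ * R) ^ 2 := by
  unfold heron; field_simp; ring

lemma sqrt_div_sq_of_pos {a b : ℝ} (hb : 0 < b) : √(a / b ^ 2) = √a / b := by
  rw [sqrt_div' _ (sq_nonneg b), sqrt_sq hb.le]

lemma mem_Ioo_of_one_sub_sq_pos {u : ℝ} (h : 0 < 1 - u ^ 2) : u ∈ Ioo (-1) 1 := by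
  rw [mem_Ioo, ← abs_lt, ← sq_lt_one_iff_abs_lt_one]; linarith

noncomputable def lensAntideriv (ρ R x : ℝ) : ℝ :=
  x ^ 2 / 2 * arccos ((ρ ^ 2 + x ^ 2 - R ^ 2) / (2 * ρ * x)) - √(heron ρ R x) / 4
    + R ^ 2 / 2 * arcsin ((x ^ 2 - ρ ^ 2 - R ^ 2) / (2 * ρ * R))

lemma hasDerivAt_lensAntideriv {ρ R x : ℝ} (hρ : 0 < ρ) (hR : 0 < R)
    (hx₁ : |R - ρ| < x) (hx₂ : x < R + ρ) :
    HasDerivAt (lensAntideriv ρ R) (x * arccos ((ρ ^ 2 + x ^ 2 - R ^ 2) / (2 * ρ * x))) x := by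
  have hx : 0 < x := (abs_nonneg _).trans_lt hx₁
  have hH := heron_pos hx₁ hx₂
  have hu := one_sub_sq_cosineRule_eq_heron_div (R := R) hρ.ne' hx.ne'
  have hv := one_sub_sq_arcsinArg_eq_heron_div (x := x) hρ.ne' hR.ne'
  obtain ⟨hu₁, hu₂⟩ := mem_Ioo_of_one_sub_sq_pos (hu ▸ div_pos hH (by positivity))
  obtain ⟨hv₁, hv₂⟩ := mem_Ioo_of_one_sub_sq_pos (hv ▸ div_pos hH (by positivity))
  have hsq : HasDerivAt (fun y : ℝ => y ^ 2) (2 * x) x := by simpa using hasDerivAt_pow 2 x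
  have hu' : HasDerivAt (fun y => (ρ ^ 2 + y ^ 2 - R ^ 2) / (2 * ρ * y))
      ((x ^ 2 - ρ ^ 2 + R ^ 2) / (2 * ρ * x ^ 2)) x := by
    refine (((hsq.const_add (ρ ^ 2)).sub_const (R ^ 2)).fun_div
      ((hasDerivAt_id' x).const_mul (2 * ρ)) (by positivity)).congr_deriv ?_
    field_simp; ring
  have hv' : HasDerivAt (fun y => (y ^ 2 - ρ ^ 2 - R ^ 2) / (2 * ρ * R)) (x / (ρ * R)) x := by
    refine (((hsq.sub_const (ρ ^ 2)).sub_const (R ^ 2)).div_const (2 * ρ * R)).congr_deriv ?_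
    field_simp
  have hH' : HasDerivAt (heron ρ R) (-4 * x * (x ^ 2 - ρ ^ 2 - R ^ 2)) x := by
    refine ((((hsq.sub_const (ρ ^ 2)).sub_const (R ^ 2)).fun_pow 2).const_sub
      (4 * ρ ^ 2 * R ^ 2)).congr_deriv ?_
    ring
  refine (((hsq.div_const 2).fun_mul ((hasDerivAt_arccos hu₁.ne' hu₂.ne).comp x hu')).fun_sub
    (((hasDerivAt_sqrt hH.ne').comp x hH').div_const 4)).fun_add
    (((hasDerivAt_arcsin hv₁.ne' hv₂.ne).comp x hv').const_mul (R ^ 2 / 2)) |>.congr_deriv ?_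
  rw [hu, hv, sqrt_div_sq_of_pos (by positivity), sqrt_div_sq_of_pos (by positivity)]
  have : 0 < √(heron ρ R x) := sqrt_pos.2 hH
  simp only [Function.comp]
  field_simp
  ring

lemma lensAntideriv_add {ρ R : ℝ} (hρ : 0 < ρ) (hR : 0 < R) :
    lensAntideriv ρ R (R + ρ) = π * R ^ 2 / 4 := by
  have hu : (ρ ^ 2 + (R + ρ) ^ 2 - R ^ 2) / (2 * ρ * (R + ρ)) = 1 := by
    rw [div_eq_one_iff_eq (by positivity)]; ring
  have hv : ((R + ρ) ^ 2 - ρ ^ 2 - R ^ 2) / (2 * ρ * R) = 1 := by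
    rw [div_eq_one_iff_eq (by positivity)]; ring
  have hH : heron ρ R (R + ρ) = 0 := by rw [heron_eq_mul]; ring
  rw [lensAntideriv, hu, hv, hH, arccos_one, arcsin_one, sqrt_zero]
  ring

lemma lensAntideriv_sub {ρ R : ℝ} (hρ : 0 < ρ) (hρR : ρ < R) :
    lensAntideriv ρ R (R - ρ) = π * (R - ρ) ^ 2 / 2 - π * R ^ 2 / 4 := by
  have hu : (ρ ^ 2 + (R - ρ) ^ 2 - R ^ 2) / (2 * ρ * (R - ρ)) = -1 := by
    have : R - ρ ≠ 0 := by linarith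
    rw [div_eq_iff (by positivity)]; ring
  have hv : ((R - ρ) ^ 2 - ρ ^ 2 - R ^ 2) / (2 * ρ * R) = -1 := by
    have : R ≠ 0 := by linarith
    rw [div_eq_iff (by positivity)]; ring
  have hH : heron ρ R (R - ρ) = 0 := by rw [heron_eq_mul]; ring
  rw [lensAntideriv, hu, hv, hH, arccos_neg_one, arcsin_neg_one, sqrt_zero]
  ring

lemma continuousOn_arccos_cosineRule {ρ : ℝ} (hρ : ρ ≠ 0) (R : ℝ) :
    ContinuousOn (fun x => arccos ((ρ ^ 2 + x ^ 2 - R ^ 2) / (2 * ρ * x))) (Ioi 0) := by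
  refine continuous_arccos.comp_continuousOn (ContinuousOn.div (by fun_prop) (by fun_prop) ?_)
  intro x hx
  exact mul_ne_zero (mul_ne_zero two_ne_zero hρ) (ne_of_gt hx)

lemma continuousOn_lensAntideriv {ρ : ℝ} (hρ : ρ ≠ 0) (R : ℝ) :
    ContinuousOn (lensAntideriv ρ R) (Ioi 0) := by
  unfold lensAntideriv heron
  exact ((continuousOn_id.pow 2 |>.div_const 2).mul (continuousOn_arccos_cosineRule hρ R)).sub
    (by fun_prop) |>.add (by fun_prop)

lemma integral_mul_arccos_cosineRule {ρ R : ℝ} (hρ : 0 < ρ) (hρR : ρ < R) :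
    ∫ x in (R - ρ)..(R + ρ), x * arccos ((ρ ^ 2 + x ^ 2 - R ^ 2) / (2 * ρ * x))
      = π / 2 * (R ^ 2 - (R - ρ) ^ 2) := by
  have hR : 0 < R := hρ.trans hρR
  have hIcc : Icc (R - ρ) (R + ρ) ⊆ Ioi 0 := fun x hx => lt_of_lt_of_le (by linarith) hx.1
  rw [integral_eq_sub_of_hasDerivAt_of_le (f := lensAntideriv ρ R) (by linarith) ?_ ?_ ?_,
    lensAntideriv_add hρ hR, lensAntideriv_sub hρ hρR]
  · ring
  · exact (continuousOn_lensAntideriv hρ.ne' R).mono hIcc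
  · intro x hx
    exact hasDerivAt_lensAntideriv hρ hR (by rw [abs_of_pos (by linarith)]; exact hx.1) hx.2
  · exact ((continuousOn_id.mul (continuousOn_arccos_cosineRule hρ.ne' R)).mono hIcc)
      |>.intervalIntegrable_of_Icc (by linarith)

open Real in
theorem cond_pdf_2D_uniform_normalized_general (R₂ ρ : ℝ) (hρ0 : 0 < ρ) (hρ : ρ < R₂) :
    (∫ r in (0:ℝ)..(R₂ - ρ), 2 * r / R₂ ^ 2) +
    (∫ r in (R₂ - ρ)..(R₂ + ρ),
      (2 * r / (π * R₂ ^ 2)) * Real.arccos ((ρ ^ 2 + r ^ 2 - R₂ ^ 2) / (2 * ρ * r))) = 1 := by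
  have hR : R₂ ≠ 0 := (hρ0.trans hρ).ne'
  have hdisk : ∫ r in (0:ℝ)..(R₂ - ρ), 2 * r / R₂ ^ 2 = (R₂ - ρ) ^ 2 / R₂ ^ 2 := by
    rw [integral_div, integral_const_mul, integral_id]
    ring
  have hlens : ∫ r in (R₂ - ρ)..(R₂ + ρ),
      (2 * r / (π * R₂ ^ 2)) * arccos ((ρ ^ 2 + r ^ 2 - R₂ ^ 2) / (2 * ρ * r))
      = 2 / (π * R₂ ^ 2) * (π / 2 * (R₂ ^ 2 - (R₂ - ρ) ^ 2)) := by
    simp_rw [mul_div_right_comm (2 : ℝ), mul_assoc (2 / (π * R₂ ^ 2))]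
    rw [integral_const_mul, integral_mul_arccos_cosineRule hρ0 hρ]
  rw [hdisk, hlens]
  field_simp
  ring

open Real in
theorem cond_pdf_2D_uniform_normalized (R₂ ρ : ℝ) (hR : 0 < R₂) (hρ0 : 0 < ρ) (hρ : ρ < R₂) :
    (∫ r in (0:ℝ)..(R₂ - ρ), 2 * r / R₂ ^ 2) +
    (∫ r in (R₂ - ρ)..(R₂ + ρ),
      (2 * r / (π * R₂ ^ 2)) * Real.arccos ((ρ ^ 2 + r ^ 2 - R₂ ^ 2) / (2 * ρ * r))) = 1 :=
  cond_pdf_2D_uniform_normalized_general R₂ ρ hρ0 hρ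
end

section
/- Fix R₂ > 0 and 0 < ρ < R₂. Define g₁(r) = −4r(ρ² + r² − R₂²)/R₂⁴ and g₂(r) = (4r/(π R₂⁴))·(√((r² − (R₂−ρ)²)((R₂+ρ)² − r²)) − (ρ² + r² − R₂²)·arccos((ρ² + r² − R₂²)/(2ρr))). Then ∫₀^{R₂−ρ} g₁(r) dr + ∫_{R₂−ρ}^{R₂+ρ} g₂(r) dr = 1. -/
/-! The first integrand is a polynomial. The second one has an elementary primitive
`outerPrimitive`: integrating by parts against `(u²)' = 4ru`, `u = ρ² + r² - R²`, and
substituting `t = r²` leaves integrals `∫ p(t) / (t √Q) dt` with `Q` the Heron product,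
quadratic in `t`. On `]R - ρ, R + ρ[` the Heron product is positive, so every
inverse-trigonometric argument stays in `]-1, 1[`; at the endpoints it vanishes and all of them
are `±1`, so the boundary values are multiples of `π` and cancel the `π` of the normalisation. -/

open Real Set

attribute [local fun_prop] continuous_arcsin continuous_arccos

lemma hasDerivAt_arcsin_of_one_sub_sq_eq {f : ℝ → ℝ} {f' x q d : ℝ} (hf : HasDerivAt f f' x)
    (hq : 0 < q) (hd : 0 < d) (h : 1 - f x ^ 2 = q / d ^ 2) :
    HasDerivAt (fun y => arcsin (f y)) (f' * d / √q) x := by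
  have hlt : f x ^ 2 < 1 := by linarith [div_pos hq (pow_pos hd 2)]
  obtain ⟨hneg, hpos⟩ := abs_lt.1 ((sq_lt_one_iff_abs_lt_one _).1 hlt)
  have hsqrt : √(1 - f x ^ 2) = √q / d := by rw [h, sqrt_div hq.le, sqrt_sq hd.le]
  refine ((hasDerivAt_arcsin hneg.ne' hpos.ne).comp x hf).congr_deriv ?_
  rw [hsqrt]
  field_simp

lemma hasDerivAt_arccos_of_one_sub_sq_eq {f : ℝ → ℝ} {f' x q d : ℝ} (hf : HasDerivAt f f' x)
    (hq : 0 < q) (hd : 0 < d) (h : 1 - f x ^ 2 = q / d ^ 2) :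
    HasDerivAt (fun y => arccos (f y)) (-(f' * d / √q)) x := by
  simpa only [arccos_eq_pi_div_two_sub_arcsin, zero_sub] using
    (hasDerivAt_arcsin_of_one_sub_sq_eq hf hq hd h).const_sub (π / 2)

lemma integral_inner_density (R ρ a : ℝ) :
    ∫ r in (0:ℝ)..a, -4 * r * (ρ ^ 2 + r ^ 2 - R ^ 2) / R ^ 4
      = (2 * (R ^ 2 - ρ ^ 2) * a ^ 2 - a ^ 4) / R ^ 4 := by
  have hF (r : ℝ) : HasDerivAt (fun r => (2 * (R ^ 2 - ρ ^ 2) * r ^ 2 - r ^ 4) / R ^ 4)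
      (-4 * r * (ρ ^ 2 + r ^ 2 - R ^ 2) / R ^ 4) r := by
    refine ((((hasDerivAt_pow 2 r).const_mul (2 * (R ^ 2 - ρ ^ 2))).sub
      (hasDerivAt_pow 4 r)).div_const (R ^ 4)).congr_deriv ?_
    push_cast
    ring
  rw [intervalIntegral.integral_eq_sub_of_hasDerivAt (fun r _ => hF r)
    (by apply Continuous.intervalIntegrable; fun_prop)]
  ring

/-- `(2ρr)² - (ρ² + r² - R²)²`, sixteen times the squared area of the triangle with sides
`ρ, r, R`. -/
def heronProduct (R ρ r : ℝ) : ℝ := (r ^ 2 - (R - ρ) ^ 2) * ((R + ρ) ^ 2 - r ^ 2)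

/-- `π R⁴ g₂(r)`. -/
noncomputable def scaledOuterDensity (R ρ r : ℝ) : ℝ :=
  4 * r * (√(heronProduct R ρ r)
    - (ρ ^ 2 + r ^ 2 - R ^ 2) * arccos ((ρ ^ 2 + r ^ 2 - R ^ 2) / (2 * ρ * r)))

noncomputable def outerPrimitive (R ρ r : ℝ) : ℝ :=
  -(ρ ^ 2 + r ^ 2 - R ^ 2) ^ 2 * arccos ((ρ ^ 2 + r ^ 2 - R ^ 2) / (2 * ρ * r))
    + (5 * r ^ 2 + ρ ^ 2 - 3 * R ^ 2) / 4 * √(heronProduct R ρ r)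
    + (R ^ 4 + 2 * R ^ 2 * ρ ^ 2 - ρ ^ 4) / 2 * arcsin ((r ^ 2 - ρ ^ 2 - R ^ 2) / (2 * ρ * R))
    - (R ^ 2 - ρ ^ 2) ^ 2 / 2 *
      arcsin (((ρ ^ 2 + R ^ 2) * r ^ 2 - (R ^ 2 - ρ ^ 2) ^ 2) / (2 * ρ * R * r ^ 2))

section

variable {R ρ r : ℝ}

lemma heronProduct_pos (hρR : ρ ≤ R) (hr : r ∈ Ioo (R - ρ) (R + ρ)) :
    0 < heronProduct R ρ r := by
  obtain ⟨h₁, h₂⟩ := hr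
  unfold heronProduct
  apply mul_pos <;> nlinarith

lemma heronProduct_R_add_ρ : heronProduct R ρ (R + ρ) = 0 := by
  unfold heronProduct
  ring

lemma heronProduct_R_sub_ρ : heronProduct R ρ (R - ρ) = 0 := by
  unfold heronProduct
  ring

lemma one_sub_sq_arccosArg_eq (hρ : ρ ≠ 0) (hr : r ≠ 0) :
    1 - ((ρ ^ 2 + r ^ 2 - R ^ 2) / (2 * ρ * r)) ^ 2 = heronProduct R ρ r / (2 * ρ * r) ^ 2 := by
  unfold heronProduct
  field_simp
  ring

lemma one_sub_sq_arcsinArg₁_eq (hρ : ρ ≠ 0) (hR : R ≠ 0) :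
    1 - ((r ^ 2 - ρ ^ 2 - R ^ 2) / (2 * ρ * R)) ^ 2 = heronProduct R ρ r / (2 * ρ * R) ^ 2 := by
  unfold heronProduct
  field_simp
  ring

lemma one_sub_sq_arcsinArg₂_eq (hρ : ρ ≠ 0) (hR : R ≠ 0) (hr : r ≠ 0) :
    1 - (((ρ ^ 2 + R ^ 2) * r ^ 2 - (R ^ 2 - ρ ^ 2) ^ 2) / (2 * ρ * R * r ^ 2)) ^ 2
      = heronProduct R ρ r / (2 * ρ * R * r ^ 2 / (R ^ 2 - ρ ^ 2)) ^ 2 := by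
  unfold heronProduct
  field_simp
  ring

lemma hasDerivAt_outerPrimitive (hρ : 0 < ρ) (hρR : ρ < R) (hr : r ∈ Ioo (R - ρ) (R + ρ)) :
    HasDerivAt (outerPrimitive R ρ) (scaledOuterDensity R ρ r) r := by
  have hr0 : 0 < r := by linarith [hr.1]
  have hR : 0 < R := hρ.trans hρR
  have hk : 0 < R ^ 2 - ρ ^ 2 := by nlinarith
  have hQ := heronProduct_pos hρR.le hr
  have hu : HasDerivAt (fun r => ρ ^ 2 + r ^ 2 - R ^ 2) (2 * r) r := by
    simpa using ((hasDerivAt_pow 2 r).const_add (ρ ^ 2)).sub_const (R ^ 2)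
  have hCoeff : HasDerivAt (fun r => (5 * r ^ 2 + ρ ^ 2 - 3 * R ^ 2) / 4) (5 * r / 2) r := by
    refine ((((hasDerivAt_pow 2 r).const_mul 5).add_const (ρ ^ 2)).sub_const (3 * R ^ 2)
      |>.div_const 4).congr_deriv ?_
    push_cast
    ring
  have hArccos := hasDerivAt_arccos_of_one_sub_sq_eq
    (hu.div ((hasDerivAt_id r).const_mul (2 * ρ)) (by positivity)) hQ (by positivity)
    (one_sub_sq_arccosArg_eq hρ.ne' hr0.ne')
  have hSqrt := (hasDerivAt_sqrt hQ.ne').comp r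
    (((hasDerivAt_pow 2 r).sub_const ((R - ρ) ^ 2)).mul
      ((hasDerivAt_pow 2 r).const_sub ((R + ρ) ^ 2)))
  have hArcsin₁ := hasDerivAt_arcsin_of_one_sub_sq_eq
    (((hasDerivAt_pow 2 r).sub_const (ρ ^ 2)).sub_const (R ^ 2) |>.div_const (2 * ρ * R)) hQ
    (by positivity) (one_sub_sq_arcsinArg₁_eq (r := r) hρ.ne' hR.ne')
  have hArcsin₂ := hasDerivAt_arcsin_of_one_sub_sq_eq
    ((((hasDerivAt_pow 2 r).const_mul (ρ ^ 2 + R ^ 2)).sub_const ((R ^ 2 - ρ ^ 2) ^ 2)).div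
      ((hasDerivAt_pow 2 r).const_mul (2 * ρ * R)) (by positivity)) hQ
    (by positivity) (one_sub_sq_arcsinArg₂_eq hρ.ne' hR.ne' hr0.ne')
  refine ((((hu.pow 2).neg.mul hArccos).add (hCoeff.mul hSqrt)).add (hArcsin₁.const_mul _)
    |>.sub (hArcsin₂.const_mul _)).congr_deriv ?_
  have hS2 := sq_sqrt hQ.le
  have hS0 := (sqrt_pos.2 hQ).ne'
  simp only [Pi.div_apply, Pi.neg_apply, Pi.pow_apply, id_eq, Function.comp_apply, Nat.cast_ofNat,
    Nat.add_one_sub_one, pow_one]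
  unfold scaledOuterDensity heronProduct at hS2 hS0 ⊢
  set S := √((r ^ 2 - (R - ρ) ^ 2) * ((R + ρ) ^ 2 - r ^ 2))
  field_simp
  -- both sides agree modulo `S² = heronProduct R ρ r`
  linear_combination (-12 * r ^ 2) * hS2

lemma continuousOn_outerPrimitive (hρ : ρ ≠ 0) (hR : R ≠ 0) :
    ContinuousOn (outerPrimitive R ρ) {0}ᶜ := by
  unfold outerPrimitive heronProduct
  fun_prop (disch := intro x hx; simp_all)

lemma continuousOn_scaledOuterDensity (hρ : ρ ≠ 0) :
    ContinuousOn (scaledOuterDensity R ρ) {0}ᶜ := by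
  unfold scaledOuterDensity heronProduct
  fun_prop (disch := intro x hx; simp_all)

lemma integral_scaledOuterDensity (hρ : 0 < ρ) (hρR : ρ < R) :
    ∫ r in (R - ρ)..(R + ρ), scaledOuterDensity R ρ r
      = outerPrimitive R ρ (R + ρ) - outerPrimitive R ρ (R - ρ) := by
  have hle : R - ρ ≤ R + ρ := by linarith
  have hsub : Icc (R - ρ) (R + ρ) ⊆ {0}ᶜ := fun r hr =>
    (show (0:ℝ) < r by linarith [hr.1]).ne'
  refine intervalIntegral.integral_eq_sub_of_hasDerivAt_of_le hle
    ((continuousOn_outerPrimitive hρ.ne' (hρ.trans hρR).ne').mono hsub)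
    (fun r hr => hasDerivAt_outerPrimitive hρ hρR hr) ?_
  exact (continuousOn_scaledOuterDensity hρ.ne' |>.mono (uIcc_of_le hle ▸ hsub)).intervalIntegrable

lemma outerPrimitive_R_add_ρ (hρ : ρ ≠ 0) (hR : R ≠ 0) (hRρ : R + ρ ≠ 0) :
    outerPrimitive R ρ (R + ρ) = π * ρ ^ 2 * (2 * R ^ 2 - ρ ^ 2) / 2 := by
  have hArccos : (ρ ^ 2 + (R + ρ) ^ 2 - R ^ 2) / (2 * ρ * (R + ρ)) = 1 := by field_simp; ring
  have hArcsin₁ : ((R + ρ) ^ 2 - ρ ^ 2 - R ^ 2) / (2 * ρ * R) = 1 := by field_simp; ring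
  have hArcsin₂ :
      ((ρ ^ 2 + R ^ 2) * (R + ρ) ^ 2 - (R ^ 2 - ρ ^ 2) ^ 2) / (2 * ρ * R * (R + ρ) ^ 2) = 1 := by
    field_simp
    ring
  rw [outerPrimitive, hArccos, hArcsin₁, hArcsin₂, heronProduct_R_add_ρ, arccos_one, arcsin_one,
    sqrt_zero]
  ring

lemma outerPrimitive_R_sub_ρ (hρ : ρ ≠ 0) (hR : R ≠ 0) (hRρ : R - ρ ≠ 0) :
    outerPrimitive R ρ (R - ρ)
      = -π * (4 * ρ ^ 2 * (R - ρ) ^ 2 + ρ ^ 2 * (2 * R ^ 2 - ρ ^ 2) / 2) := by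
  have hArccos : (ρ ^ 2 + (R - ρ) ^ 2 - R ^ 2) / (2 * ρ * (R - ρ)) = -1 := by field_simp; ring
  have hArcsin₁ : ((R - ρ) ^ 2 - ρ ^ 2 - R ^ 2) / (2 * ρ * R) = -1 := by field_simp; ring
  have hArcsin₂ :
      ((ρ ^ 2 + R ^ 2) * (R - ρ) ^ 2 - (R ^ 2 - ρ ^ 2) ^ 2) / (2 * ρ * R * (R - ρ) ^ 2) = -1 := by
    field_simp
    ring
  rw [outerPrimitive, hArccos, hArcsin₁, hArcsin₂, heronProduct_R_sub_ρ, arccos_neg_one,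
    arcsin_neg_one, sqrt_zero]
  ring

end

open Real in
theorem cond_pdf_2D_rwp_normalized_general (R₂ ρ : ℝ) (hρ0 : 0 < ρ) (hρ : ρ < R₂) :
    (∫ r in (0:ℝ)..(R₂ - ρ), -4 * r * (ρ ^ 2 + r ^ 2 - R₂ ^ 2) / R₂ ^ 4) +
    (∫ r in (R₂ - ρ)..(R₂ + ρ),
      (4 * r / (π * R₂ ^ 4)) *
        (Real.sqrt ((r ^ 2 - (R₂ - ρ) ^ 2) * ((R₂ + ρ) ^ 2 - r ^ 2)) -
          (ρ ^ 2 + r ^ 2 - R₂ ^ 2) *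
            Real.arccos ((ρ ^ 2 + r ^ 2 - R₂ ^ 2) / (2 * ρ * r)))) = 1 := by
  have hR : 0 < R₂ := hρ0.trans hρ
  have houter := integral_scaledOuterDensity hρ0 hρ
  unfold scaledOuterDensity heronProduct at houter
  rw [integral_inner_density]
  simp only [div_mul_eq_mul_div, intervalIntegral.integral_div, houter]
  rw [outerPrimitive_R_add_ρ hρ0.ne' hR.ne' (by linarith),
    outerPrimitive_R_sub_ρ hρ0.ne' hR.ne' (by linarith)]
  field_simp
  ring

open Real in
theorem cond_pdf_2D_rwp_normalized (R₂ ρ : ℝ) (hR : 0 < R₂) (hρ0 : 0 < ρ) (hρ : ρ < R₂) :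
    (∫ r in (0:ℝ)..(R₂ - ρ), -4 * r * (ρ ^ 2 + r ^ 2 - R₂ ^ 2) / R₂ ^ 4) +
    (∫ r in (R₂ - ρ)..(R₂ + ρ),
      (4 * r / (π * R₂ ^ 4)) *
        (Real.sqrt ((r ^ 2 - (R₂ - ρ) ^ 2) * ((R₂ + ρ) ^ 2 - r ^ 2)) -
          (ρ ^ 2 + r ^ 2 - R₂ ^ 2) *
            Real.arccos ((ρ ^ 2 + r ^ 2 - R₂ ^ 2) / (2 * ρ * r)))) = 1 :=
  cond_pdf_2D_rwp_normalized_general R₂ ρ hρ0 hρ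
end

section
/- Fix R₂ > 0 and 0 < ρ < R₂. With g₃(ρ,r) = ρ² + r² − R₂², g₄(ρ,r) = 13r² − 21R₂² + 13ρ², and g₅(ρ,r) = (r − ρ + R₂)²(ρ − r + R₂)², define g₁(r) = 35r²(104ρ²r² + 6·g₃(ρ,r)·g₄(ρ,r))/(432R₂⁷) and g₂(r) = 35r(25R₂² − 13(r − ρ)²)·g₅(ρ,r)/(864R₂⁷ρ). Then ∫₀^{R₂−ρ} g₁(r) dr + ∫_{R₂−ρ}^{R₂+ρ} g₂(r) dr = 1. -/
/-!
Both pieces of the density are polynomials in `r`, so each integral is a difference of values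
of an explicit polynomial antiderivative, and the boundary terms add up to `1` by an identity of
rational functions of `R₂` and `ρ`.
-/

open intervalIntegral Polynomial

theorem Polynomial.integral_eq_eval_sub_eval {f : ℝ → ℝ} (p : ℝ[X])
    (hf : ∀ x, p.derivative.eval x = f x) (a b : ℝ) :
    ∫ x in a..b, f x = p.eval b - p.eval a :=
  integral_eq_sub_of_hasDerivAt (fun x _ => hf x ▸ p.hasDerivAt x)
    ((p.derivative.continuous.congr hf).intervalIntegrable a b)

theorem integral_cond_pdf_3D_rwp_inner (R ρ a : ℝ) :
    ∫ r in (0:ℝ)..a, 35 * r ^ 2 * (104 * ρ ^ 2 * r ^ 2 +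
        6 * (ρ ^ 2 + r ^ 2 - R ^ 2) * (13 * r ^ 2 - 21 * R ^ 2 + 13 * ρ ^ 2)) / (432 * R ^ 7) =
      a ^ 3 * (390 * a ^ 4 + 28 * (65 * ρ ^ 2 - 51 * R ^ 2) * a ^ 2 +
        70 * (ρ ^ 2 - R ^ 2) * (13 * ρ ^ 2 - 21 * R ^ 2)) / (432 * R ^ 7) := by
  rw [integral_eq_eval_sub_eval (C (432 * R ^ 7)⁻¹ * X ^ 3 * (C 390 * X ^ 4 +
    C (28 * (65 * ρ ^ 2 - 51 * R ^ 2)) * X ^ 2 +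
    C (70 * (ρ ^ 2 - R ^ 2) * (13 * ρ ^ 2 - 21 * R ^ 2))))]
  · simp only [eval_mul, eval_add, eval_pow, eval_C, eval_X]
    ring
  · intro x
    simp only [derivative_mul, derivative_add, derivative_pow, derivative_C, derivative_X,
      eval_mul, eval_add, eval_pow, eval_C, eval_X, eval_zero, eval_one]
    ring

/- In `u = r - ρ` the integrand is `35 (u + ρ) (25 R² - 13 u²) (R² - u²)² / (864 R⁷ ρ)`; its odd
part has the antiderivative `-(35/8) w³ (16 R² + 13 w)` in `w = R² - u²`. -/
theorem integral_cond_pdf_3D_rwp_outer (R ρ : ℝ) (hρ : ρ ≠ 0) :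
    ∫ r in (R - ρ)..(R + ρ), 35 * r * (25 * R ^ 2 - 13 * (r - ρ) ^ 2) *
        ((r - ρ + R) ^ 2 * (ρ - r + R) ^ 2) / (864 * R ^ 7 * ρ) =
      (432 * R ^ 7 - (875 * R ^ 6 * (R - 2 * ρ) - 735 * R ^ 4 * (R - 2 * ρ) ^ 3 +
        357 * R ^ 2 * (R - 2 * ρ) ^ 5 - 65 * (R - 2 * ρ) ^ 7) +
        1120 * ρ ^ 2 * (R - ρ) ^ 3 * (4 * R ^ 2 + 13 * ρ * (R - ρ))) / (864 * R ^ 7) := by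
  rw [integral_eq_eval_sub_eval (C (864 * R ^ 7 * ρ)⁻¹ *
    (C ρ * (C (875 * R ^ 6) * (X - C ρ) - C (735 * R ^ 4) * (X - C ρ) ^ 3 +
      C (357 * R ^ 2) * (X - C ρ) ^ 5 - C 65 * (X - C ρ) ^ 7) -
    C (35 / 8) * (C (R ^ 2) - (X - C ρ) ^ 2) ^ 3 *
      (C (16 * R ^ 2) + C 13 * (C (R ^ 2) - (X - C ρ) ^ 2))))]
  · simp only [eval_mul, eval_add, eval_sub, eval_pow, eval_C, eval_X]
    field_simp
    ring
  · intro x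
    simp only [derivative_mul, derivative_add, derivative_sub, derivative_pow, derivative_C,
      derivative_X, eval_mul, eval_add, eval_sub, eval_pow, eval_C, eval_X, eval_zero, eval_one]
    ring

theorem cond_pdf_3D_rwp_normalized_general (R₂ ρ : ℝ) (hR : 0 < R₂) (hρ0 : 0 < ρ) :
    (∫ r in (0:ℝ)..(R₂ - ρ),
      35 * r ^ 2 * (104 * ρ ^ 2 * r ^ 2 +
        6 * (ρ ^ 2 + r ^ 2 - R₂ ^ 2) * (13 * r ^ 2 - 21 * R₂ ^ 2 + 13 * ρ ^ 2)) /
        (432 * R₂ ^ 7)) +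
    (∫ r in (R₂ - ρ)..(R₂ + ρ),
      35 * r * (25 * R₂ ^ 2 - 13 * (r - ρ) ^ 2) *
        ((r - ρ + R₂) ^ 2 * (ρ - r + R₂) ^ 2) / (864 * R₂ ^ 7 * ρ)) = 1 := by
  rw [integral_cond_pdf_3D_rwp_inner, integral_cond_pdf_3D_rwp_outer R₂ ρ hρ0.ne']
  field_simp [hR.ne']
  ring

theorem cond_pdf_3D_rwp_normalized (R₂ ρ : ℝ) (hR : 0 < R₂) (hρ0 : 0 < ρ) (hρ : ρ < R₂) :
    (∫ r in (0:ℝ)..(R₂ - ρ),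
      35 * r ^ 2 * (104 * ρ ^ 2 * r ^ 2 +
        6 * (ρ ^ 2 + r ^ 2 - R₂ ^ 2) * (13 * r ^ 2 - 21 * R₂ ^ 2 + 13 * ρ ^ 2)) /
        (432 * R₂ ^ 7)) +
    (∫ r in (R₂ - ρ)..(R₂ + ρ),
      35 * r * (25 * R₂ ^ 2 - 13 * (r - ρ) ^ 2) *
        ((r - ρ + R₂) ^ 2 * (ρ - r + R₂) ^ 2) / (864 * R₂ ^ 7 * ρ)) = 1 :=
  cond_pdf_3D_rwp_normalized_general R₂ ρ hR hρ0
end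

section
/- Let R > 0 and define f(r) = (2r/R⁴)·( (2(R² − r²)/π)·arccos(r/(2R)) + (r(r² + 2R²)/(2πR))·√(1 − (r/(2R))²) ) for 0 ≤ r ≤ 2R. Then ∫₀^{2R} f(r) dr = 1 and f(r) ≥ 0 on [0, 2R]. -/
/-!
Substituting `r = 2R cos θ` writes the density as `(8 cos θ / (π R)) · g θ` with
`g θ = sin θ cos θ (2 cos² θ + 1) + (1 - 4 cos² θ) θ`. Now `g 0 = 0` and
`g' θ = 8 sin θ cos θ (θ - sin θ cos θ) ≥ 0` on `[0, π/2]`, because `sin θ cos θ ≤ sin θ ≤ θ`.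
The total mass is read off an explicit distribution function, which is `0` at `0` and `1` at `2R`.
-/

open Real Set

namespace DiskDistance

noncomputable section

def pdf (R r : ℝ) : ℝ :=
  (2 * r / R ^ 4) * ((2 * (R ^ 2 - r ^ 2) / π) * arccos (r / (2 * R)) +
    (r * (r ^ 2 + 2 * R ^ 2) / (2 * π * R)) * √(1 - (r / (2 * R)) ^ 2))

def cdf (R r : ℝ) : ℝ :=
  1 + (((2 * r ^ 2 * R ^ 2 - r ^ 4) / R ^ 4 - 2) * arccos (r / (2 * R)) +
    (r ^ 5 + 5 * R ^ 2 * r ^ 3 - 6 * R ^ 4 * r) / (6 * R ^ 5) * √(1 - (r / (2 * R)) ^ 2)) / π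

def angularDensity (θ : ℝ) : ℝ :=
  sin θ * cos θ * (2 * cos θ ^ 2 + 1) + (1 - 4 * cos θ ^ 2) * θ

end

lemma continuous_pdf (R : ℝ) : Continuous (pdf R) := by
  unfold pdf; fun_prop

lemma continuous_cdf (R : ℝ) : Continuous (cdf R) := by
  unfold cdf; fun_prop

lemma cdf_zero (R : ℝ) : cdf R 0 = 0 := by
  rw [cdf, zero_div, arccos_zero]
  field_simp
  ring

lemma cdf_two_mul {R : ℝ} (hR : R ≠ 0) : cdf R (2 * R) = 1 := by
  simp [cdf, hR]

lemma hasDerivAt_cdf {R r : ℝ} (hr : |r| < 2 * R) : HasDerivAt (cdf R) (pdf R r) r := by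
  have hR : 0 < R := by linarith [abs_nonneg r]
  have hx : |r / (2 * R)| < 1 := by
    rwa [abs_div, abs_of_pos (by positivity : (0:ℝ) < 2 * R), div_lt_one (by positivity)]
  have hu : 0 < 1 - (r / (2 * R)) ^ 2 := by
    nlinarith [sq_abs (r / (2 * R)), abs_nonneg (r / (2 * R))]
  have hxr : HasDerivAt (fun r : ℝ => r / (2 * R)) (1 / (2 * R)) r := (hasDerivAt_id r).div_const _
  set s := √(1 - (r / (2 * R)) ^ 2) with hs
  have hA : HasDerivAt (arccos ∘ fun r : ℝ => r / (2 * R)) (-(1 / s) * (1 / (2 * R))) r :=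
    (hasDerivAt_arccos (abs_lt.1 hx).1.ne' (abs_lt.1 hx).2.ne).comp r hxr
  have hS : HasDerivAt (fun r : ℝ => √(1 - (r / (2 * R)) ^ 2))
      (-(2 * (r / (2 * R)) * (1 / (2 * R))) / (2 * s)) r := by
    simpa using ((hxr.pow 2).const_sub 1).sqrt hu.ne'
  have hP : HasDerivAt (fun r : ℝ => (2 * r ^ 2 * R ^ 2 - r ^ 4) / R ^ 4 - 2)
      ((2 * (2 * r ^ 1) * R ^ 2 - 4 * r ^ 3) / R ^ 4) r :=
    ((((hasDerivAt_pow 2 r).const_mul 2).mul_const (R ^ 2)).sub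
      (hasDerivAt_pow 4 r)).div_const (R ^ 4) |>.sub_const 2
  have hQ : HasDerivAt (fun r : ℝ => (r ^ 5 + 5 * R ^ 2 * r ^ 3 - 6 * R ^ 4 * r) / (6 * R ^ 5))
      ((5 * r ^ 4 + 5 * R ^ 2 * (3 * r ^ 2) - 6 * R ^ 4 * 1) / (6 * R ^ 5)) r :=
    (((hasDerivAt_pow 5 r).add ((hasDerivAt_pow 3 r).const_mul (5 * R ^ 2))).sub
      ((hasDerivAt_id r).const_mul (6 * R ^ 4))).div_const (6 * R ^ 5)
  refine ((((hP.mul hA).add (hQ.mul hS)).div_const π).const_add 1).congr_deriv ?_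
  have hs0 : 0 < s := sqrt_pos.2 hu
  have hss : s ^ 2 * (4 * R ^ 2) = 4 * R ^ 2 - r ^ 2 := by
    rw [hs, sq_sqrt hu.le]; field_simp; ring
  simp only [pdf, Function.comp_apply]
  rw [← hs]
  field_simp
  linear_combination -(r ^ 4 - 3 * r ^ 2 * R ^ 2 + 6 * R ^ 4) * hss

theorem integral_pdf {R : ℝ} (hR : 0 < R) : ∫ r in (0:ℝ)..(2 * R), pdf R r = 1 := by
  rw [intervalIntegral.integral_eq_sub_of_hasDerivAt_of_le (by positivity)
    (continuous_cdf R).continuousOn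
    (fun r hr => hasDerivAt_cdf (by rw [abs_of_pos hr.1]; exact hr.2))
    ((continuous_pdf R).intervalIntegrable _ _), cdf_two_mul hR.ne', cdf_zero, sub_zero]

lemma hasDerivAt_angularDensity (θ : ℝ) :
    HasDerivAt angularDensity (8 * sin θ * cos θ * (θ - sin θ * cos θ)) θ := by
  have h := (((hasDerivAt_sin θ).mul (hasDerivAt_cos θ)).mul
    ((((hasDerivAt_cos θ).pow 2).const_mul 2).add_const 1)).add
    ((((hasDerivAt_cos θ).pow 2).const_mul 4).const_sub 1 |>.mul (hasDerivAt_id θ))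
  refine h.congr_deriv ?_
  simp only [Pi.mul_apply, Pi.pow_apply, id, Nat.cast_ofNat]
  linear_combination (2 * cos θ ^ 2 - 1) * sin_sq_add_cos_sq θ

lemma monotoneOn_angularDensity : MonotoneOn angularDensity (Icc 0 (π / 2)) := by
  refine monotoneOn_of_hasDerivWithinAt_nonneg (convex_Icc _ _)
    (continuous_iff_continuousAt.2 fun θ => (hasDerivAt_angularDensity θ).continuousAt).continuousOn
    (fun θ _ => (hasDerivAt_angularDensity θ).hasDerivWithinAt) fun θ hθ => ?_
  rw [interior_Icc] at hθ
  have hsin : 0 ≤ sin θ := sin_nonneg_of_nonneg_of_le_pi hθ.1.le (by linarith [hθ.2, pi_pos])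
  have hcos : 0 ≤ cos θ := cos_nonneg_of_mem_Icc ⟨by linarith [hθ.1, pi_pos], hθ.2.le⟩
  have hsc : sin θ * cos θ ≤ θ := (mul_le_of_le_one_right hsin (cos_le_one θ)).trans (sin_le hθ.1.le)
  have := mul_nonneg (mul_nonneg hsin hcos) (sub_nonneg.2 hsc)
  linarith

lemma angularDensity_nonneg {θ : ℝ} (hθ : θ ∈ Icc 0 (π / 2)) : 0 ≤ angularDensity θ := by
  simpa [angularDensity] using
    monotoneOn_angularDensity ⟨le_rfl, by positivity⟩ hθ hθ.1

lemma pdf_eq_mul_angularDensity {R r : ℝ} (hR : 0 < R) (hr : |r| ≤ 2 * R) :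
    pdf R r = 4 * r / (π * R ^ 2) * angularDensity (arccos (r / (2 * R))) := by
  have hx : |r / (2 * R)| ≤ 1 := by
    rwa [abs_div, abs_of_pos (by positivity : (0:ℝ) < 2 * R), div_le_one (by positivity)]
  rw [angularDensity, cos_arccos (abs_le.1 hx).1 (abs_le.1 hx).2, sin_arccos, pdf]
  field_simp
  ring

theorem pdf_nonneg {R r : ℝ} (hR : 0 < R) (hr : r ∈ Icc 0 (2 * R)) : 0 ≤ pdf R r := by
  obtain ⟨hr0, hr2R⟩ := hr
  rw [pdf_eq_mul_angularDensity hR (by rwa [abs_of_nonneg hr0])]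
  exact mul_nonneg (by positivity) <| angularDensity_nonneg
    ⟨arccos_nonneg _, arccos_le_pi_div_two.2 (by positivity)⟩

end DiskDistance

open Real in
theorem pdf_2D_s1s2_equal_radii (R : ℝ) (hR : 0 < R) :
    (∫ r in (0:ℝ)..(2 * R),
      (2 * r / R ^ 4) * ((2 * (R ^ 2 - r ^ 2) / π) * Real.arccos (r / (2 * R)) +
        (r * (r ^ 2 + 2 * R ^ 2) / (2 * π * R)) * Real.sqrt (1 - (r / (2 * R)) ^ 2))) = 1 ∧
    (∀ r ∈ Set.Icc (0:ℝ) (2 * R),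
      0 ≤ (2 * r / R ^ 4) * ((2 * (R ^ 2 - r ^ 2) / π) * Real.arccos (r / (2 * R)) +
        (r * (r ^ 2 + 2 * R ^ 2) / (2 * π * R)) * Real.sqrt (1 - (r / (2 * R)) ^ 2))) := by
  exact ⟨DiskDistance.integral_pdf hR, fun r hr => DiskDistance.pdf_nonneg hR hr⟩
end

section
/- Let R > 0 and define f(r) = (2r/R⁴)·( (4(2R² − 3r²)/(3π))·arccos(r/(2R)) + ((−r⁵ + 16r³R² + 12rR⁴)/(9πR³))·√(1 − (r/(2R))²) ) for 0 ≤ r ≤ 2R. Then ∫₀^{2R} f(r) dr = 1. -/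
/-!
Substituting `r = 2 R u` turns the density into the radius-free density `normDistPDF` on `[0, 1]`,
of the form `P(u) arccos u + Q(u) √(1 - u²)` with polynomials `P`, `Q`. Since
`(p arccos + q √(1 - u²))' = p' arccos + (q' (1 - u²) - u q - p) / √(1 - u²)`,
a primitive of the same shape is found by matching coefficients. Adding `1`, it vanishes at `0`
(where `arccos 0 = π / 2`) and equals `1` at `1`.
-/

open Real Set

theorem hasDerivAt_sqrt_one_sub_sq {x : ℝ} (h₁ : x ≠ -1) (h₂ : x ≠ 1) :
    HasDerivAt (fun y => √(1 - y ^ 2)) (-x / √(1 - x ^ 2)) x := by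
  have hx : 1 - x ^ 2 ≠ 0 := by
    intro h
    rcases sq_eq_one_iff.mp (by linarith : x ^ 2 = 1) with h | h <;> contradiction
  convert ((hasDerivAt_pow 2 x).const_sub 1).sqrt hx using 1
  ring

theorem HasDerivAt.mul_arccos_add_mul_sqrt_one_sub_sq {p q : ℝ → ℝ} {p' q' x : ℝ}
    (hp : HasDerivAt p p' x) (hq : HasDerivAt q q' x) (h₁ : x ≠ -1) (h₂ : x ≠ 1) :
    HasDerivAt (fun y => p y * arccos y + q y * √(1 - y ^ 2))
      (p' * arccos x + (q' * (1 - x ^ 2) - x * q x - p x) / √(1 - x ^ 2)) x := by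
  refine ((hp.fun_mul (hasDerivAt_arccos h₁ h₂)).fun_add
    (hq.fun_mul (hasDerivAt_sqrt_one_sub_sq h₁ h₂))).congr_deriv ?_
  rcases eq_or_ne √(1 - x ^ 2) 0 with hs | hs
  · simp [hs]
  · have hs2 : √(1 - x ^ 2) ^ 2 = 1 - x ^ 2 := sq_sqrt (sqrt_ne_zero'.mp hs).le
    field_simp
    rw [hs2]
    ring

noncomputable def normDistPDF (u : ℝ) : ℝ :=
  (64 * u - 384 * u ^ 3) / (3 * π) * arccos u +
    (-256 * u ^ 6 + 1024 * u ^ 4 + 192 * u ^ 2) / (9 * π) * √(1 - u ^ 2)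

noncomputable def normDistCDF (u : ℝ) : ℝ :=
  1 + ((32 * u ^ 2 - 96 * u ^ 4 - 6) / (3 * π) * arccos u +
    (-32 * u ^ 7 + 176 * u ^ 5 + 84 * u ^ 3 - 18 * u) / (9 * π) * √(1 - u ^ 2))

theorem continuous_normDistPDF : Continuous normDistPDF := by
  unfold normDistPDF; fun_prop

theorem continuous_normDistCDF : Continuous normDistCDF := by
  unfold normDistCDF; fun_prop

theorem normDistCDF_zero : normDistCDF 0 = 0 := by
  rw [normDistCDF, arccos_zero]
  field_simp
  ring

theorem normDistCDF_one : normDistCDF 1 = 1 := by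
  simp [normDistCDF]

theorem hasDerivAt_normDistCDF {u : ℝ} (hu : u ∈ Ioo (-1) 1) :
    HasDerivAt normDistCDF (normDistPDF u) u := by
  have hp : HasDerivAt (fun y : ℝ => (32 * y ^ 2 - 96 * y ^ 4 - 6) / (3 * π))
      ((64 * u - 384 * u ^ 3) / (3 * π)) u :=
    ((((hasDerivAt_pow 2 u).const_mul 32).fun_sub ((hasDerivAt_pow 4 u).const_mul 96)).sub_const
      6).div_const (3 * π) |>.congr_deriv (by push_cast; ring)
  have hq : HasDerivAt (fun y : ℝ => (-32 * y ^ 7 + 176 * y ^ 5 + 84 * y ^ 3 - 18 * y) / (9 * π))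
      ((-224 * u ^ 6 + 880 * u ^ 4 + 252 * u ^ 2 - 18) / (9 * π)) u :=
    (((((hasDerivAt_pow 7 u).const_mul (-32)).fun_add
      ((hasDerivAt_pow 5 u).const_mul 176)).fun_add
      ((hasDerivAt_pow 3 u).const_mul 84)).fun_sub ((hasDerivAt_id u).const_mul 18)).div_const
      (9 * π) |>.congr_deriv (by push_cast; ring)
  refine ((hp.mul_arccos_add_mul_sqrt_one_sub_sq hq hu.1.ne' hu.2.ne).const_add 1).congr_deriv ?_
  have hcoeff : (-224 * u ^ 6 + 880 * u ^ 4 + 252 * u ^ 2 - 18) / (9 * π) * (1 - u ^ 2)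
      - u * ((-32 * u ^ 7 + 176 * u ^ 5 + 84 * u ^ 3 - 18 * u) / (9 * π))
      - (32 * u ^ 2 - 96 * u ^ 4 - 6) / (3 * π)
      = (-256 * u ^ 6 + 1024 * u ^ 4 + 192 * u ^ 2) / (9 * π) *
          (√(1 - u ^ 2) * √(1 - u ^ 2)) := by
    rw [mul_self_sqrt (by nlinarith [hu.1, hu.2])]
    field_simp
    ring
  rw [normDistPDF, hcoeff, mul_div_assoc, mul_self_div_self]

theorem integral_normDistPDF : ∫ u in (0 : ℝ)..1, normDistPDF u = 1 := by
  rw [intervalIntegral.integral_eq_sub_of_hasDerivAt_of_le zero_le_one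
    continuous_normDistCDF.continuousOn
    (fun u hu => hasDerivAt_normDistCDF ⟨by linarith [hu.1], hu.2⟩)
    (continuous_normDistPDF.intervalIntegrable 0 1), normDistCDF_one, normDistCDF_zero, sub_zero]

noncomputable def distPDF (R r : ℝ) : ℝ :=
  (2 * r / R ^ 4) * ((4 * (2 * R ^ 2 - 3 * r ^ 2) / (3 * π)) * arccos (r / (2 * R)) +
    ((-r ^ 5 + 16 * r ^ 3 * R ^ 2 + 12 * r * R ^ 4) / (9 * π * R ^ 3)) *
      √(1 - (r / (2 * R)) ^ 2))

theorem two_mul_distPDF_two_mul {R : ℝ} (hR : R ≠ 0) (u : ℝ) :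
    2 * R * distPDF R (2 * R * u) = normDistPDF u := by
  rw [distPDF, normDistPDF, mul_div_cancel_left₀ u (mul_ne_zero two_ne_zero hR)]
  field_simp
  ring

theorem integral_distPDF {R : ℝ} (hR : R ≠ 0) : ∫ r in (0 : ℝ)..2 * R, distPDF R r = 1 :=
  calc ∫ r in (0 : ℝ)..2 * R, distPDF R r
      = 2 * R * ∫ u in (0 : ℝ)..1, distPDF R (2 * R * u) := by
        rw [intervalIntegral.mul_integral_comp_mul_left, mul_zero, mul_one]
    _ = ∫ u in (0 : ℝ)..1, normDistPDF u := by
        rw [← intervalIntegral.integral_const_mul]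
        exact intervalIntegral.integral_congr fun u _ => two_mul_distPDF_two_mul hR u
    _ = 1 := integral_normDistPDF

open Real in
theorem pdf_2D_s3_equal_radii (R : ℝ) (hR : 0 < R) :
    (∫ r in (0:ℝ)..(2 * R),
      (2 * r / R ^ 4) * ((4 * (2 * R ^ 2 - 3 * r ^ 2) / (3 * π)) * Real.arccos (r / (2 * R)) +
        ((-r ^ 5 + 16 * r ^ 3 * R ^ 2 + 12 * r * R ^ 4) / (9 * π * R ^ 3)) *
          Real.sqrt (1 - (r / (2 * R)) ^ 2))) = 1 :=
  integral_distPDF hR.ne'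
end
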